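/- Suppose f : ℝ → ℝ satisfies ‖f‖_{H^j} ≤ C^{1+j}·(1+j)^{s·j} for all j ∈ ℕ, for some constants C > 0 and s ≥ 1 (Sobolev-based Gevrey class). Then for every s′ > s there exists λ > 0 such that ∫_ℝ exp(λ·⟨ξ⟩^{1/s′}) · |𝔉f(ξ)|² dξ < ∞. -/

import Mathlib

open MeasureTheory Real Filter Topology FourierTransform




private lemma gevrey_pow_div_factorial_le_exp (m : ℕ) : (m:ℝ)^m / m.factorial ≤ Real.exp m := by
  rw [Real.exp_eq_exp_ℝ, NormedSpace.exp_eq_tsum_div]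
  exact Summable.le_tsum (Real.summable_pow_div_factorial _) m (fun k _ => by positivity)

private lemma fact_lower (m : ℕ) : ((m:ℝ)/Real.exp 1)^m ≤ m.factorial := by
  have h1 := gevrey_pow_div_factorial_le_exp m
  have h2 : Real.exp m = Real.exp 1 ^ m := by
    rw [← Real.exp_nat_mul]; ring_nf
  have hfac : (0:ℝ) < m.factorial := by exact_mod_cast m.factorial_pos
  have hexp : (0:ℝ) < Real.exp 1 ^ m := by positivity
  rw [div_pow, div_le_iff₀ hexp]
  rw [div_le_iff₀ hfac, h2] at h1
  linarith [h1]

private lemma gevrey_aux_summable (C s s' : ℝ) (hC : 0 < C) (hs : 1 ≤ s) (hss' : s < s') :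
    Summable (fun m : ℕ =>
      (C ^ (1 + ⌈(m:ℝ)/(2*s')⌉₊) * (1 + (⌈(m:ℝ)/(2*s')⌉₊ : ℝ)) ^ (s * ⌈(m:ℝ)/(2*s')⌉₊)) ^ 2
        / (m.factorial : ℝ)) := by
  have hs'1 : 1 < s' := lt_of_le_of_lt hs hss'
  have hs'0 : 0 < s' := by linarith
  have hs0 : 0 < s := by linarith
  set K : ℝ := max C 1 with hKdef
  have hK1 : 1 ≤ K := le_max_right _ _
  have hCK : C ≤ K := le_max_left _ _
  have hK0 : 0 < K := by linarith
  set σ : ℝ := s / s' with hσdef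
  set τ : ℝ := (1 + σ)/2 with hτdef
  have hσ0 : 0 < σ := by positivity
  have hσ1 : σ < 1 := (div_lt_one hs'0).mpr hss'
  have hστ : σ < τ := by rw [hτdef]; linarith
  have hτ1 : τ < 1 := by rw [hτdef]; linarith
  have hτ0 : 0 < τ := by linarith
  -- eventual conditions
  have heva : ∀ᶠ m : ℕ in atTop, 2 * s ≤ (τ - σ) * m := by
    have : Tendsto (fun m : ℕ => (τ - σ) * m) atTop atTop :=
      (tendsto_natCast_atTop_atTop (R := ℝ)).const_mul_atTop (by linarith)
    exact this.eventually_ge_atTop _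
  have hevb : ∀ᶠ m : ℕ in atTop, 2 * Real.exp 1 * K^4 * (1 + (m:ℝ)) ^ τ ≤ m := by
    have h0 : Tendsto (fun x : ℝ => (1 + x) ^ (τ - 1)) atTop (𝓝 0) := by
      have := (tendsto_rpow_neg_atTop (y := 1 - τ) (by linarith)).comp
        (tendsto_atTop_add_const_left atTop 1 tendsto_id)
      simpa [Function.comp_def, neg_sub] using this
    have h1 : Tendsto (fun x : ℝ => (1 + x) ^ τ / x) atTop (𝓝 0) := by
      have hx : ∀ᶠ x : ℝ in atTop, (1 + x) ^ (τ - 1) * ((1 + x) / x) = (1 + x) ^ τ / x := by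
        filter_upwards [eventually_gt_atTop (0:ℝ)] with x hx
        rw [Real.rpow_sub (by linarith), Real.rpow_one]
        field_simp
      have h2 : Tendsto (fun x : ℝ => (1 + x) / x) atTop (𝓝 1) := by
        have h2' : Tendsto (fun x : ℝ => x⁻¹ + 1) atTop (𝓝 (0 + 1)) :=
          tendsto_inv_atTop_zero.add tendsto_const_nhds
        rw [zero_add] at h2'
        refine h2'.congr' ?_
        filter_upwards [eventually_gt_atTop (0:ℝ)] with x hx
        field_simp
      have := h0.mul h2
      rw [zero_mul] at this
      exact this.congr' hx
    have h3 : Tendsto (fun m : ℕ => (1 + (m:ℝ)) ^ τ / m) atTop (𝓝 0) :=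
      h1.comp tendsto_natCast_atTop_atTop
    have hδ : (0:ℝ) < 1 / (2 * Real.exp 1 * K^4) := by positivity
    filter_upwards [h3.eventually (gt_mem_nhds hδ), eventually_gt_atTop 0] with m hm hm0
    have hm0' : (0:ℝ) < m := by exact_mod_cast hm0
    rw [div_lt_iff₀ hm0'] at hm
    have h4 : (1 + (m:ℝ)) ^ τ ≤ 1 / (2 * Real.exp 1 * K ^ 4) * m := le_of_lt hm
    have h5 : (0:ℝ) < 2 * Real.exp 1 * K^4 := by positivity
    calc 2 * Real.exp 1 * K^4 * (1 + (m:ℝ)) ^ τ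
        ≤ 2 * Real.exp 1 * K^4 * (1 / (2 * Real.exp 1 * K ^ 4) * m) :=
          mul_le_mul_of_nonneg_left h4 (le_of_lt h5)
      _ = (m:ℝ) := by field_simp
  obtain ⟨M, hM⟩ := eventually_atTop.mp ((heva.and hevb).and (eventually_ge_atTop 1))
  -- key bound
  have key : ∀ m : ℕ, M ≤ m →
      (C ^ (1 + ⌈(m:ℝ)/(2*s')⌉₊) * (1 + (⌈(m:ℝ)/(2*s')⌉₊ : ℝ)) ^ (s * ⌈(m:ℝ)/(2*s')⌉₊)) ^ 2
        / (m.factorial : ℝ) ≤ (1/2) ^ m := by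
    intro m hm
    obtain ⟨⟨ha, hb⟩, hm1⟩ := hM m hm
    set j : ℕ := ⌈(m:ℝ)/(2*s')⌉₊ with hjdef
    have hm1' : (1:ℝ) ≤ m := by exact_mod_cast hm1
    have hj1 : (m:ℝ)/(2*s') ≤ j := Nat.le_ceil _
    have hj2 : (j:ℝ) < (m:ℝ)/(2*s') + 1 := Nat.ceil_lt_add_one (by positivity)
    have hjm : j ≤ m := by
      rw [hjdef]
      exact Nat.ceil_le.mpr (div_le_self (by positivity) (by linarith))
    -- bound the base
    have hB : C ^ (1 + j) * (1 + (j:ℝ)) ^ (s * j)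
        ≤ K ^ (1 + m) * (1 + (m:ℝ)) ^ (σ * (m/2) + s) := by
      have h1 : C ^ (1 + j) ≤ K ^ (1 + m) :=
        le_trans (pow_le_pow_left₀ hC.le hCK _) (pow_le_pow_right₀ hK1 (by omega))
      have h2 : (1 + (j:ℝ)) ^ (s * j) ≤ (1 + (m:ℝ)) ^ (σ * (m/2) + s) := by
        have hbase : (1 + (j:ℝ)) ≤ 1 + m := by
          have : (j:ℝ) ≤ m := by exact_mod_cast hjm
          linarith
        have hexp : s * j ≤ σ * ((m:ℝ)/2) + s := by
          have : (j:ℝ) ≤ (m:ℝ)/(2*s') + 1 := le_of_lt hj2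
          have h := mul_le_mul_of_nonneg_left this hs0.le
          calc s * (j:ℝ) ≤ s * ((m:ℝ)/(2*s') + 1) := h
            _ = σ * ((m:ℝ)/2) + s := by rw [hσdef]; field_simp
        calc (1 + (j:ℝ)) ^ (s * j) ≤ (1 + (m:ℝ)) ^ (s * j) :=
              Real.rpow_le_rpow (by positivity) hbase (by positivity)
          _ ≤ (1 + (m:ℝ)) ^ (σ * (m/2) + s) :=
              Real.rpow_le_rpow_of_exponent_le (by linarith) hexp
      exact mul_le_mul h1 h2 (by positivity) (by positivity)
    -- square it
    have hBsq : (C ^ (1 + j) * (1 + (j:ℝ)) ^ (s * j)) ^ 2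
        ≤ (K ^ (1 + m) * (1 + (m:ℝ)) ^ (σ * (m/2) + s)) ^ 2 :=
      pow_le_pow_left₀ (by positivity) hB 2
    -- bound D^2 by (K^4 (1+m)^τ)^m
    have hD : (K ^ (1 + m) * (1 + (m:ℝ)) ^ (σ * (m/2) + s)) ^ 2
        ≤ (K^4 * (1 + (m:ℝ)) ^ τ) ^ m := by
      have e1 : (K ^ (1 + m)) ^ 2 = K^2 * (K^2)^m := by ring
      have e2 : ((1 + (m:ℝ)) ^ (σ * (m/2) + s)) ^ 2 = (1 + (m:ℝ)) ^ (σ * m + 2 * s) := by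
        rw [← Real.rpow_natCast ((1 + (m:ℝ)) ^ (σ * (m/2) + s)) 2, ← Real.rpow_mul (by positivity)]
        norm_num
        ring_nf
      rw [mul_pow, e1, e2]
      have h3 : K^2 * (K^2)^m ≤ (K^4)^m := by
        calc K^2 * (K^2)^m ≤ (K^2)^m * (K^2)^m := by
              apply mul_le_mul_of_nonneg_right _ (by positivity)
              exact le_self_pow₀ (by nlinarith : (1:ℝ) ≤ K^2) (by omega)
          _ = (K^4)^m := by rw [← mul_pow]; ring_nf
      have h4 : (1 + (m:ℝ)) ^ (σ * m + 2 * s) ≤ ((1 + (m:ℝ)) ^ τ) ^ m := by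
        rw [← Real.rpow_natCast ((1 + (m:ℝ)) ^ τ) m, ← Real.rpow_mul (by positivity)]
        apply Real.rpow_le_rpow_of_exponent_le (by linarith)
        have : σ * m + 2 * s ≤ σ * m + (τ - σ) * m := by linarith
        calc σ * (m:ℝ) + 2 * s ≤ σ * m + (τ - σ) * m := this
          _ = τ * m := by ring
      calc K^2 * (K^2)^m * (1 + (m:ℝ)) ^ (σ * m + 2*s)
          ≤ (K^4)^m * ((1 + (m:ℝ)) ^ τ)^m := by
            apply mul_le_mul h3 h4 (by positivity) (by positivity)
        _ = (K^4 * (1 + (m:ℝ)) ^ τ)^m := by rw [← mul_pow]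
    -- bound (K^4 (1+m)^τ)^m ≤ (m/(2e))^m
    have hE : (K^4 * (1 + (m:ℝ)) ^ τ) ^ m ≤ ((m:ℝ)/(2*Real.exp 1)) ^ m := by
      apply pow_le_pow_left₀ (by positivity)
      rw [le_div_iff₀ (by positivity)]
      have hgen : ∀ A : ℝ, 2 * Real.exp 1 * K ^ 4 * A ≤ m → K^4 * A * (2 * Real.exp 1) ≤ (m:ℝ) := by
        intro A hA; linarith [hA]
      exact hgen _ hb
    -- combine with factorial lower bound
    have hfac : (0:ℝ) < m.factorial := by exact_mod_cast m.factorial_pos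
    rw [div_le_iff₀ hfac]
    calc (C ^ (1 + j) * (1 + (j:ℝ)) ^ (s * j)) ^ 2
        ≤ ((m:ℝ)/(2*Real.exp 1)) ^ m := le_trans hBsq (le_trans hD hE)
      _ = (1/2)^m * ((m:ℝ)/Real.exp 1) ^ m := by rw [← mul_pow]; ring_nf
      _ ≤ (1/2)^m * m.factorial := by
          apply mul_le_mul_of_nonneg_left (fact_lower m) (by positivity)
  -- conclude summability
  rw [← summable_nat_add_iff M]
  apply Summable.of_nonneg_of_le (fun n => by positivity) (fun n => ?_)
    (summable_geometric_of_lt_one (by norm_num) (by norm_num : (1/2:ℝ) < 1))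
  calc _ ≤ ((1:ℝ)/2) ^ (n + M) := key (n + M) (by omega)
    _ ≤ (1/2)^n := by
        apply pow_le_pow_of_le_one (by norm_num) (by norm_num)
        omega

/-- Sobolev-based Gevrey bounds imply exponential Fourier weight integrability
(Definition (2) ⟹ Definition (3), with arbitrarily small loss in `s`). -/
theorem gevrey_sobolev_to_fourier (f : ℝ → ℝ) (C s : ℝ) (hC : 0 < C) (hs : 1 ≤ s)
    (h : ∀ j : ℕ,
      (∫⁻ ξ : ℝ, ENNReal.ofReal
          ((1 + ξ ^ 2) ^ j * ‖FourierTransform.fourier (fun x => (f x : ℂ)) ξ‖ ^ 2))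
        ≤ ENNReal.ofReal ((C ^ (1 + j) * (1 + j : ℝ) ^ (s * j)) ^ 2)) :
    ∀ s' : ℝ, s < s' → ∃ lam : ℝ, 0 < lam ∧
      (∫⁻ ξ : ℝ, ENNReal.ofReal
          (Real.exp (lam * Real.sqrt (1 + ξ ^ 2) ^ (1 / s')) *
            ‖FourierTransform.fourier (fun x => (f x : ℂ)) ξ‖ ^ 2)) < ⊤ := by
  intro s' hss'
  have hs'1 : 1 < s' := lt_of_le_of_lt hs hss'
  have hs'0 : 0 < s' := by linarith
  refine ⟨1, one_pos, ?_⟩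
  set g : ℝ → ℂ := fun x => (f x : ℂ) with hg
  by_cases hmeas : AEStronglyMeasurable g (volume : Measure ℝ)
  · -- measurable case
    have hF : AEStronglyMeasurable (FourierTransform.fourier g) (volume : Measure ℝ) := by
      have hker : AEStronglyMeasurable
          (fun p : ℝ × ℝ => (𝐞 (-(p.2 * p.1)) : Circle) • g p.2)
          ((volume : Measure ℝ).prod (volume : Measure ℝ)) := by
        apply AEStronglyMeasurable.fun_smul _ hmeas.comp_snd
        exact (Real.continuous_fourierChar.comp
          (continuous_snd.mul continuous_fst).neg).aestronglyMeasurable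
      have := hker.integral_prod_right'
      refine this.congr (Filter.Eventually.of_forall fun ξ => ?_)
      rw [Real.fourier_real_eq]
    have hw : AEMeasurable (fun ξ : ℝ => ‖FourierTransform.fourier g ξ‖ ^ 2)
        (volume : Measure ℝ) := (hF.norm.aemeasurable).pow_const 2
    have hpt : ∀ ξ : ℝ,
        ENNReal.ofReal (Real.exp (1 * Real.sqrt (1 + ξ ^ 2) ^ (1 / s')) *
            ‖FourierTransform.fourier g ξ‖ ^ 2)
          = ∑' m : ℕ, ENNReal.ofReal
              ((Real.sqrt (1 + ξ ^ 2) ^ (1 / s')) ^ m / m.factorial *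
                ‖FourierTransform.fourier g ξ‖ ^ 2) := by
      intro ξ
      rw [one_mul]
      simp only [Real.exp_eq_exp_ℝ, NormedSpace.exp_eq_tsum_div]
      rw [← tsum_mul_right]
      exact ENNReal.ofReal_tsum_of_nonneg (fun m => by positivity)
        ((Real.summable_pow_div_factorial _).mul_right _)
    have hmeas_term : ∀ m : ℕ, AEMeasurable (fun ξ : ℝ => ENNReal.ofReal
        ((Real.sqrt (1 + ξ ^ 2) ^ (1 / s')) ^ m / m.factorial *
          ‖FourierTransform.fourier g ξ‖ ^ 2)) (volume : Measure ℝ) := by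
      intro m
      apply ENNReal.measurable_ofReal.comp_aemeasurable
      apply AEMeasurable.mul _ hw
      apply Continuous.aemeasurable
      apply Continuous.div_const
      apply Continuous.pow
      apply Continuous.rpow_const
      · exact (continuous_const.add (continuous_id.pow 2)).sqrt
      · intro x; right; positivity
    have hterm : ∀ m : ℕ,
        (∫⁻ ξ : ℝ, ENNReal.ofReal
            ((Real.sqrt (1 + ξ ^ 2) ^ (1 / s')) ^ m / m.factorial *
              ‖FourierTransform.fourier g ξ‖ ^ 2))
          ≤ ENNReal.ofReal
              ((C ^ (1 + ⌈(m:ℝ)/(2*s')⌉₊) *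
                (1 + (⌈(m:ℝ)/(2*s')⌉₊ : ℝ)) ^ (s * ⌈(m:ℝ)/(2*s')⌉₊)) ^ 2
                / (m.factorial : ℝ)) := by
      intro m
      set j : ℕ := ⌈(m:ℝ)/(2*s')⌉₊ with hjdef
      have hfac0 : (0:ℝ) < m.factorial := by exact_mod_cast m.factorial_pos
      have hpoint : ∀ ξ : ℝ,
          ENNReal.ofReal ((Real.sqrt (1 + ξ ^ 2) ^ (1 / s')) ^ m / m.factorial *
              ‖FourierTransform.fourier g ξ‖ ^ 2)
            ≤ ENNReal.ofReal ((m.factorial : ℝ)⁻¹) *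
              ENNReal.ofReal ((1 + ξ ^ 2) ^ j * ‖FourierTransform.fourier g ξ‖ ^ 2) := by
        intro ξ
        rw [← ENNReal.ofReal_mul (by positivity)]
        apply ENNReal.ofReal_le_ofReal
        have hx0 : (0:ℝ) ≤ 1 + ξ ^ 2 := by positivity
        have hx1 : (1:ℝ) ≤ 1 + ξ ^ 2 := by nlinarith [sq_nonneg ξ]
        have ha : (Real.sqrt (1 + ξ ^ 2) ^ (1 / s')) ^ m ≤ (1 + ξ ^ 2) ^ j := by
          have e1 : (Real.sqrt (1 + ξ ^ 2) ^ (1 / s')) ^ m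
              = (1 + ξ ^ 2) ^ ((1/2) * (1/s') * m) := by
            rw [Real.sqrt_eq_rpow, ← Real.rpow_mul hx0, ← Real.rpow_natCast
              ((1 + ξ ^ 2) ^ ((1:ℝ)/2 * (1/s'))) m, ← Real.rpow_mul hx0]
          rw [e1]
          have e2 : (1 + ξ ^ 2) ^ (j:ℕ) = (1 + ξ ^ 2) ^ ((j:ℕ):ℝ) :=
            (Real.rpow_natCast _ _).symm
          rw [e2]
          apply Real.rpow_le_rpow_of_exponent_le hx1
          have hj1 : (m:ℝ)/(2*s') ≤ (j:ℝ) := Nat.le_ceil _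
          calc (1:ℝ)/2 * (1/s') * m = (m:ℝ)/(2*s') := by field_simp
            _ ≤ (j:ℝ) := hj1
        calc (Real.sqrt (1 + ξ ^ 2) ^ (1 / s')) ^ m / m.factorial *
              ‖FourierTransform.fourier g ξ‖ ^ 2
            ≤ (1 + ξ ^ 2) ^ j / m.factorial * ‖FourierTransform.fourier g ξ‖ ^ 2 := by
              gcongr
          _ = (m.factorial : ℝ)⁻¹ * ((1 + ξ ^ 2) ^ j * ‖FourierTransform.fourier g ξ‖ ^ 2) := by
              ring
      calc (∫⁻ ξ : ℝ, ENNReal.ofReal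
            ((Real.sqrt (1 + ξ ^ 2) ^ (1 / s')) ^ m / m.factorial *
              ‖FourierTransform.fourier g ξ‖ ^ 2))
          ≤ ∫⁻ ξ : ℝ, ENNReal.ofReal ((m.factorial : ℝ)⁻¹) *
              ENNReal.ofReal ((1 + ξ ^ 2) ^ j * ‖FourierTransform.fourier g ξ‖ ^ 2) :=
            lintegral_mono hpoint
        _ = ENNReal.ofReal ((m.factorial : ℝ)⁻¹) *
            ∫⁻ ξ : ℝ, ENNReal.ofReal ((1 + ξ ^ 2) ^ j * ‖FourierTransform.fourier g ξ‖ ^ 2) :=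
            lintegral_const_mul' _ _ ENNReal.ofReal_ne_top
        _ ≤ ENNReal.ofReal ((m.factorial : ℝ)⁻¹) *
            ENNReal.ofReal ((C ^ (1 + j) * (1 + (j:ℝ)) ^ (s * j)) ^ 2) :=
            mul_le_mul_right (h j) _
        _ = ENNReal.ofReal ((C ^ (1 + j) * (1 + (j:ℝ)) ^ (s * j)) ^ 2 / m.factorial) := by
            rw [← ENNReal.ofReal_mul (by positivity)]
            congr 1
            field_simp
    calc (∫⁻ ξ : ℝ, ENNReal.ofReal
          (Real.exp (1 * Real.sqrt (1 + ξ ^ 2) ^ (1 / s')) *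
            ‖FourierTransform.fourier g ξ‖ ^ 2))
        = ∑' m : ℕ, ∫⁻ ξ : ℝ, ENNReal.ofReal
            ((Real.sqrt (1 + ξ ^ 2) ^ (1 / s')) ^ m / m.factorial *
              ‖FourierTransform.fourier g ξ‖ ^ 2) := by
          simp_rw [hpt]
          exact lintegral_tsum hmeas_term
      _ ≤ ∑' m : ℕ, ENNReal.ofReal
            ((C ^ (1 + ⌈(m:ℝ)/(2*s')⌉₊) *
              (1 + (⌈(m:ℝ)/(2*s')⌉₊ : ℝ)) ^ (s * ⌈(m:ℝ)/(2*s')⌉₊)) ^ 2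
              / (m.factorial : ℝ)) := ENNReal.tsum_le_tsum hterm
      _ = ENNReal.ofReal (∑' m : ℕ,
            ((C ^ (1 + ⌈(m:ℝ)/(2*s')⌉₊) *
              (1 + (⌈(m:ℝ)/(2*s')⌉₊ : ℝ)) ^ (s * ⌈(m:ℝ)/(2*s')⌉₊)) ^ 2
              / (m.factorial : ℝ))) :=
          (ENNReal.ofReal_tsum_of_nonneg (fun m => by positivity)
            (gevrey_aux_summable C s s' hC hs hss')).symm
      _ < ⊤ := ENNReal.ofReal_lt_top
  · -- non-measurable case: the Fourier integral is identically zero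
    have hF0 : ∀ ξ : ℝ, FourierTransform.fourier g ξ = 0 := by
      intro ξ
      rw [Real.fourier_real_eq]
      apply integral_undef
      intro hint
      apply hmeas
      have h1 := hint.aestronglyMeasurable
      have h2 : g = fun v => ((𝐞 (-(v * ξ)))⁻¹ : Circle) • ((𝐞 (-(v * ξ)) : Circle) • g v) := by
        funext v
        rw [inv_smul_smul]
      rw [h2]
      apply AEStronglyMeasurable.fun_smul _ h1
      exact ((Real.continuous_fourierChar.comp
        ((continuous_id.mul continuous_const).neg)).inv).aestronglyMeasurable
    simp only [hF0, norm_zero]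
    simp
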